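/- Let G be a finite connected weighted graph with edge lengths in [ℓ_min, ℓ_max], r = ℓ_max/ℓ_min. Let S be a set of k sources that is a 2-approximation for the k-center problem (max_p d(p,S) ≤ 2·min over all k-subsets T of max_p d(p,T)), and let S* be a set of k sources minimizing the stretch factor F* = max_{p≠q} d(p,S*,q)/d(p,q). Then the stretch factor of S satisfies max_{p≠q} d(p,S,q)/d(p,q) ≤ 2r²·F* + 2r² + 8r + 1. -/
import Mathlib


open SimpleGraph Finset

noncomputable def walkLen {V : Type*} (G : SimpleGraph V) (ℓ : V → V → ℝ) {p q : V}
    (w : G.Walk p q) : ℝ :=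
  (w.darts.map fun d => ℓ d.toProd.1 d.toProd.2).sum

noncomputable def gdist {V : Type*} (G : SimpleGraph V) (ℓ : V → V → ℝ) (p q : V) : ℝ :=
  sInf {x | ∃ w : G.Walk p q, walkLen G ℓ w = x}

noncomputable def dvia {V : Type*} (G : SimpleGraph V) (ℓ : V → V → ℝ) (S : Finset V)
    (hS : S.Nonempty) (p q : V) : ℝ :=
  S.inf' hS fun s => gdist G ℓ p s + gdist G ℓ s q

noncomputable def dnear {V : Type*} (G : SimpleGraph V) (ℓ : V → V → ℝ) (S : Finset V)
    (hS : S.Nonempty) (p : V) : ℝ :=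
  S.inf' hS fun s => gdist G ℓ p s

noncomputable def stretch {V : Type*} (G : SimpleGraph V) (ℓ : V → V → ℝ) (S : Finset V)
    (hS : S.Nonempty) : ℝ :=
  sSup {x | ∃ p q : V, p ≠ q ∧ x = dvia G ℓ S hS p q / gdist G ℓ p q}

noncomputable def farthest {V : Type*} (G : SimpleGraph V) (ℓ : V → V → ℝ) (S : Finset V)
    (hS : S.Nonempty) : ℝ :=
  sSup {x | ∃ p : V, x = dnear G ℓ S hS p}

section Helpers

variable {V : Type*} {G : SimpleGraph V} {ℓ : V → V → ℝ} {lmin lmax : ℝ}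

lemma walkLen_nonneg (hlmin : 0 < lmin)
    (hbounds : ∀ a b, G.Adj a b → lmin ≤ ℓ a b ∧ ℓ a b ≤ lmax)
    {p q : V} (w : G.Walk p q) : 0 ≤ walkLen G ℓ w := by
  apply List.sum_nonneg
  intro x hx
  simp only [List.mem_map] at hx
  obtain ⟨d, _, rfl⟩ := hx
  exact le_trans hlmin.le (hbounds _ _ d.adj).1

lemma gdist_bddBelow (hlmin : 0 < lmin)
    (hbounds : ∀ a b, G.Adj a b → lmin ≤ ℓ a b ∧ ℓ a b ≤ lmax) (p q : V) :
    BddBelow {x | ∃ w : G.Walk p q, walkLen G ℓ w = x} := by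
  refine ⟨0, fun x hx => ?_⟩
  obtain ⟨w, rfl⟩ := hx
  exact walkLen_nonneg hlmin hbounds w

lemma gdist_set_nonempty (hconn : G.Connected) (p q : V) :
    Set.Nonempty {x | ∃ w : G.Walk p q, walkLen G ℓ w = x} := by
  obtain ⟨w⟩ := hconn.preconnected p q
  exact ⟨walkLen G ℓ w, w, rfl⟩

lemma gdist_le_walkLen (hlmin : 0 < lmin)
    (hbounds : ∀ a b, G.Adj a b → lmin ≤ ℓ a b ∧ ℓ a b ≤ lmax)
    {p q : V} (w : G.Walk p q) : gdist G ℓ p q ≤ walkLen G ℓ w :=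
  csInf_le (gdist_bddBelow hlmin hbounds p q) ⟨w, rfl⟩

lemma gdist_nonneg (hconn : G.Connected) (hlmin : 0 < lmin)
    (hbounds : ∀ a b, G.Adj a b → lmin ≤ ℓ a b ∧ ℓ a b ≤ lmax) (p q : V) :
    0 ≤ gdist G ℓ p q := by
  apply le_csInf (gdist_set_nonempty hconn p q)
  rintro x ⟨w, rfl⟩
  exact walkLen_nonneg hlmin hbounds w

lemma walkLen_reverse (hsymm : ∀ a b, ℓ a b = ℓ b a) {p q : V} (w : G.Walk p q) :
    walkLen G ℓ w.reverse = walkLen G ℓ w := by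
  unfold walkLen
  rw [Walk.darts_reverse, List.map_reverse, List.sum_reverse, List.map_map]
  congr 1
  apply List.map_congr_left
  intro d _
  simp [Dart.symm_toProd, Prod.swap, hsymm]

lemma gdist_symm (hconn : G.Connected) (hlmin : 0 < lmin)
    (hbounds : ∀ a b, G.Adj a b → lmin ≤ ℓ a b ∧ ℓ a b ≤ lmax)
    (hsymm : ∀ a b, ℓ a b = ℓ b a) (p q : V) :
    gdist G ℓ p q = gdist G ℓ q p := by
  have key : ∀ a b : V, gdist G ℓ a b ≤ gdist G ℓ b a := by
    intro a b
    apply le_csInf (gdist_set_nonempty hconn b a)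
    rintro x ⟨w, rfl⟩
    calc gdist G ℓ a b ≤ walkLen G ℓ w.reverse := gdist_le_walkLen hlmin hbounds _
    _ = walkLen G ℓ w := walkLen_reverse hsymm w
  exact le_antisymm (key p q) (key q p)

lemma walkLen_append {p s q : V} (w1 : G.Walk p s) (w2 : G.Walk s q) :
    walkLen G ℓ (w1.append w2) = walkLen G ℓ w1 + walkLen G ℓ w2 := by
  unfold walkLen
  rw [Walk.darts_append, List.map_append, List.sum_append]

lemma gdist_triangle (hconn : G.Connected) (hlmin : 0 < lmin)
    (hbounds : ∀ a b, G.Adj a b → lmin ≤ ℓ a b ∧ ℓ a b ≤ lmax) (p s q : V) :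
    gdist G ℓ p q ≤ gdist G ℓ p s + gdist G ℓ s q := by
  apply le_of_forall_pos_le_add
  intro ε hε
  obtain ⟨x1, ⟨w1, rfl⟩, h1⟩ := Real.lt_sInf_add_pos (gdist_set_nonempty hconn p s) (half_pos hε)
  obtain ⟨x2, ⟨w2, rfl⟩, h2⟩ := Real.lt_sInf_add_pos (gdist_set_nonempty hconn s q) (half_pos hε)
  calc gdist G ℓ p q ≤ walkLen G ℓ (w1.append w2) := gdist_le_walkLen hlmin hbounds _
  _ = walkLen G ℓ w1 + walkLen G ℓ w2 := walkLen_append w1 w2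
  _ ≤ (gdist G ℓ p s + ε / 2) + (gdist G ℓ s q + ε / 2) := by
      exact add_le_add h1.le h2.le
  _ = gdist G ℓ p s + gdist G ℓ s q + ε := by ring

lemma walkLen_cons {u v w : V} (h : G.Adj u v) (w' : G.Walk v w) :
    walkLen G ℓ (Walk.cons h w') = ℓ u v + walkLen G ℓ w' := by
  unfold walkLen; rw [Walk.darts_cons, List.map_cons, List.sum_cons]

lemma lmin_le_gdist (hconn : G.Connected) (hlmin : 0 < lmin)
    (hbounds : ∀ a b, G.Adj a b → lmin ≤ ℓ a b ∧ ℓ a b ≤ lmax)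
    {p q : V} (hpq : p ≠ q) : lmin ≤ gdist G ℓ p q := by
  apply le_csInf (gdist_set_nonempty hconn p q)
  rintro x ⟨w, rfl⟩
  cases w with
  | nil => exact absurd rfl hpq
  | cons h w' =>
    rw [walkLen_cons]
    have := walkLen_nonneg hlmin hbounds w'
    have := (hbounds _ _ h).1
    linarith

lemma gdist_le_lmax (hlmin : 0 < lmin)
    (hbounds : ∀ a b, G.Adj a b → lmin ≤ ℓ a b ∧ ℓ a b ≤ lmax)
    {p q : V} (h : G.Adj p q) : gdist G ℓ p q ≤ lmax := by
  have hw : gdist G ℓ p q ≤ walkLen G ℓ (Walk.cons h Walk.nil) :=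
    gdist_le_walkLen hlmin hbounds _
  have : walkLen G ℓ (Walk.cons h Walk.nil) = ℓ p q := by
    unfold walkLen; simp
  rw [this] at hw
  exact hw.trans (hbounds _ _ h).2

lemma exists_adj (hconn : G.Connected) [Nontrivial V] (p : V) : ∃ q, G.Adj p q := by
  obtain ⟨v, hv⟩ := exists_ne p
  obtain ⟨w⟩ := hconn.preconnected p v
  cases w with
  | nil => exact absurd rfl hv
  | cons h _ => exact ⟨_, h⟩

end Helpers

/-- the stretch factor of a 2-approximate k-center solution S is bounded in
terms of the optimal stretch factor F* of k sources. -/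
theorem stmt_9 {V : Type*} [Fintype V] [Nontrivial V] (G : SimpleGraph V) (hconn : G.Connected)
    (ℓ : V → V → ℝ) (hsymm : ∀ a b, ℓ a b = ℓ b a)
    (lmin lmax : ℝ) (hlmin : 0 < lmin)
    (hbounds : ∀ a b, G.Adj a b → lmin ≤ ℓ a b ∧ ℓ a b ≤ lmax)
    (r : ℝ) (hr : r = lmax / lmin) (k : ℕ)
    (S : Finset V) (hS : S.Nonempty) (hcard : S.card = k)
    (h2approx : ∀ (T : Finset V) (hT : T.Nonempty), T.card = k →
      farthest G ℓ S hS ≤ 2 * farthest G ℓ T hT)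
    (Sstar : Finset V) (hSstar : Sstar.Nonempty) (hcardstar : Sstar.card = k)
    (hopt : ∀ (T : Finset V) (hT : T.Nonempty), T.card = k →
      stretch G ℓ Sstar hSstar ≤ stretch G ℓ T hT) :
    stretch G ℓ S hS ≤
      2 * r ^ 2 * stretch G ℓ Sstar hSstar + 2 * r ^ 2 + 8 * r + 1 := by
  have hsym := gdist_symm hconn hlmin hbounds hsymm
  have htri := gdist_triangle hconn hlmin hbounds
  have hnn := gdist_nonneg hconn hlmin hbounds
  set F := stretch G ℓ Sstar hSstar with hFdef
  -- r ≥ 1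
  obtain ⟨p₀⟩ : Nonempty V := inferInstance
  obtain ⟨q₀, hadj₀⟩ := exists_adj hconn p₀
  have hlml : lmin ≤ lmax := le_trans (hbounds _ _ hadj₀).1 (hbounds _ _ hadj₀).2
  have hr1 : 1 ≤ r := by rw [hr]; exact (one_le_div hlmin).2 hlml
  have hlmax : 0 < lmax := lt_of_lt_of_le hlmin hlml
  -- boundedness facts
  have hbddstar : BddAbove {x | ∃ p q : V, p ≠ q ∧
      x = dvia G ℓ Sstar hSstar p q / gdist G ℓ p q} := by
    apply BddAbove.mono ?_ (Set.finite_range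
      (fun pq : V × V => dvia G ℓ Sstar hSstar pq.1 pq.2 / gdist G ℓ pq.1 pq.2)).bddAbove
    rintro x ⟨p, q, _, rfl⟩
    exact ⟨(p, q), rfl⟩
  have hbddfar : BddAbove {x | ∃ p : V, x = dnear G ℓ S hS p} := by
    apply BddAbove.mono ?_ (Set.finite_range (fun p : V => dnear G ℓ S hS p)).bddAbove
    rintro x ⟨p, rfl⟩
    exact ⟨p, rfl⟩
  have hdvia_nn : ∀ (T : Finset V) (hT : T.Nonempty) (p q : V), 0 ≤ dvia G ℓ T hT p q := by
    intro T hT p q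
    obtain ⟨s, hs, heq⟩ := Finset.exists_mem_eq_inf' hT (fun s => gdist G ℓ p s + gdist G ℓ s q)
    rw [dvia, heq]
    exact add_nonneg (hnn _ _) (hnn _ _)
  -- F ≥ 0
  have hF0 : 0 ≤ F := by
    obtain ⟨p, q, hpq⟩ := exists_pair_ne V
    have hmem : dvia G ℓ Sstar hSstar p q / gdist G ℓ p q ∈
        {x | ∃ p q : V, p ≠ q ∧ x = dvia G ℓ Sstar hSstar p q / gdist G ℓ p q} :=
      ⟨p, q, hpq, rfl⟩
    exact le_trans (div_nonneg (hdvia_nn Sstar hSstar p q) (hnn p q)) (le_csSup hbddstar hmem)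
  -- F bounds each ratio
  have hFge : ∀ p q : V, p ≠ q → dvia G ℓ Sstar hSstar p q ≤ F * gdist G ℓ p q := by
    intro p q hpq
    have h1 : dvia G ℓ Sstar hSstar p q / gdist G ℓ p q ≤ F :=
      le_csSup hbddstar ⟨p, q, hpq, rfl⟩
    have hpos : 0 < gdist G ℓ p q :=
      lt_of_lt_of_le hlmin (lmin_le_gdist hconn hlmin hbounds hpq)
    exact (div_le_iff₀ hpos).1 h1
  -- farthest Sstar ≤ lmax * (F + 1) / 2
  have hfar_star : farthest G ℓ Sstar hSstar ≤ lmax * (F + 1) / 2 := by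
    rw [farthest]
    refine csSup_le ⟨dnear G ℓ Sstar hSstar p₀, ⟨p₀, rfl⟩⟩ ?_
    rintro x ⟨p, rfl⟩
    obtain ⟨q, hadj⟩ := exists_adj hconn p
    have hpq : p ≠ q := hadj.ne
    have hdle : gdist G ℓ p q ≤ lmax := gdist_le_lmax hlmin hbounds hadj
    have key : 2 * dnear G ℓ Sstar hSstar p - gdist G ℓ p q ≤ dvia G ℓ Sstar hSstar p q := by
      rw [dvia]
      apply Finset.le_inf'
      intro s hs
      have h1 : dnear G ℓ Sstar hSstar p ≤ gdist G ℓ p s := Finset.inf'_le _ hs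
      have h2 : gdist G ℓ p s ≤ gdist G ℓ p q + gdist G ℓ q s := htri p q s
      have h3 : gdist G ℓ q s = gdist G ℓ s q := hsym q s
      linarith
    have h4 := hFge p q hpq
    have h5 : F * gdist G ℓ p q ≤ F * lmax := mul_le_mul_of_nonneg_left hdle hF0
    linarith
  -- farthest S ≤ lmax * (F + 1)
  have hfarS : farthest G ℓ S hS ≤ lmax * (F + 1) := by
    have h6 := h2approx Sstar hSstar hcardstar
    linarith
  have hdnear_le : ∀ p, dnear G ℓ S hS p ≤ farthest G ℓ S hS :=
    fun p => le_csSup hbddfar ⟨p, rfl⟩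
  -- final bound
  rw [stretch]
  apply csSup_le
  · obtain ⟨p, q, hpq⟩ := exists_pair_ne V
    exact ⟨_, p, q, hpq, rfl⟩
  rintro x ⟨p, q, hpq, rfl⟩
  obtain ⟨s, hsS, hseq⟩ := Finset.exists_mem_eq_inf' hS (fun s => gdist G ℓ p s)
  have h1 : dvia G ℓ S hS p q ≤ gdist G ℓ p s + gdist G ℓ s q := by
    rw [dvia]; exact Finset.inf'_le _ hsS
  have h2 : gdist G ℓ s q ≤ gdist G ℓ s p + gdist G ℓ p q := htri s p q
  have h3 : gdist G ℓ s p = gdist G ℓ p s := hsym s p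
  have h4 : gdist G ℓ p s = dnear G ℓ S hS p := by rw [dnear, hseq]
  have h5 : dnear G ℓ S hS p ≤ lmax * (F + 1) := le_trans (hdnear_le p) hfarS
  have hdpq : lmin ≤ gdist G ℓ p q := lmin_le_gdist hconn hlmin hbounds hpq
  have hdpos : 0 < gdist G ℓ p q := lt_of_lt_of_le hlmin hdpq
  have hAnn : 0 ≤ 2 * (lmax * (F + 1)) := by positivity
  have hnum : dvia G ℓ S hS p q ≤ gdist G ℓ p q + 2 * (lmax * (F + 1)) := by linarith
  have hratio : dvia G ℓ S hS p q / gdist G ℓ p q ≤ 1 + 2 * (lmax * (F + 1)) / lmin := by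
    calc dvia G ℓ S hS p q / gdist G ℓ p q
        ≤ (gdist G ℓ p q + 2 * (lmax * (F + 1))) / gdist G ℓ p q :=
          (div_le_div_iff_of_pos_right hdpos).2 hnum
      _ = 1 + 2 * (lmax * (F + 1)) / gdist G ℓ p q := by
          rw [add_div, div_self hdpos.ne']
      _ ≤ 1 + 2 * (lmax * (F + 1)) / lmin := by
          have := div_le_div_of_nonneg_left hAnn hlmin hdpq
          linarith
  have hA : 2 * (lmax * (F + 1)) / lmin = 2 * r * (F + 1) := by
    rw [hr]; field_simp
  rw [hA] at hratio
  have hint : 0 ≤ 2 * r * F * (r - 1) := by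
    apply mul_nonneg (mul_nonneg (mul_nonneg (by norm_num) (by linarith)) hF0)
    linarith
  nlinarith [hratio, hr1, hF0, hint]
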